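/- arXiv:2312.14308 — 3 statements merged into one kernel-verified Lean document; each statement's English description precedes it below -/
import Mathlib

section
/- The fourth partial derivative of F_beta in direction e_i equals beta^3 * (E_{mu_x}[(l_i - E_{mu_x} l_i)^4] - 3*(Var_{mu_x} l_i)^2), and hence |partial_i^4 F_beta(x)| <= 26 * beta^3 * E_{mu_x}[l_i^4] <= 26 * beta^3 * max_{t in T} |t_i|^4. -/
open Finset

/-!
Along the line `s ↦ x + s eᵢ`, `F_β` is `β⁻¹ log Z` for an exponential sum
`Z(s) = ∑ aₜ exp(β tᵢ s)`. The moments `Mₖ = Zₖ / Z`, `Zₖ(s) = ∑ aₜ tᵢᵏ exp(β tᵢ s)`, of the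
tilted measure satisfy `Mₖ' = β (Mₖ₊₁ - Mₖ M₁)`, so four differentiations of `β⁻¹ log Z` give
`β³` times the fourth cumulant `M₄ - 4 M₃ M₁ - 3 M₂² + 12 M₂ M₁² - 6 M₁⁴`, which is the central
fourth moment minus three times the squared variance. Both of these are nonnegative and, by
Jensen's inequality and `(a - b)⁴ ≤ 8 (a⁴ + b⁴)`, at most `16 E[ℓᵢ⁴]`.
-/

section WeightedMoments

variable {ι : Type*} {T : Finset ι} {w : ι → ℝ} (f : ι → ℝ)

theorem fourth_cumulant_eq_central (hw : ∑ t ∈ T, w t = 1) :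
    (∑ t ∈ T, w t * f t ^ 4) - 4 * (∑ t ∈ T, w t * f t ^ 3) * (∑ t ∈ T, w t * f t)
        - 3 * (∑ t ∈ T, w t * f t ^ 2) ^ 2
        + 12 * (∑ t ∈ T, w t * f t ^ 2) * (∑ t ∈ T, w t * f t) ^ 2
        - 6 * (∑ t ∈ T, w t * f t) ^ 4
      = (∑ t ∈ T, w t * (f t - ∑ u ∈ T, w u * f u) ^ 4)
        - 3 * ((∑ t ∈ T, w t * f t ^ 2) - (∑ t ∈ T, w t * f t) ^ 2) ^ 2 := by
  set c := ∑ u ∈ T, w u * f u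
  have hexpand : ∀ t ∈ T, w t * (f t - c) ^ 4 = w t * f t ^ 4 - 4 * c * (w t * f t ^ 3)
      + 6 * c ^ 2 * (w t * f t ^ 2) - 4 * c ^ 3 * (w t * f t) + c ^ 4 * w t :=
    fun t _ => by ring
  rw [sum_congr rfl hexpand]
  simp only [sum_add_distrib, sum_sub_distrib, ← mul_sum, hw]
  ring

theorem sub_pow_four_le (a b : ℝ) : (a - b) ^ 4 ≤ 8 * (a ^ 4 + b ^ 4) := by
  nlinarith [sq_nonneg (a + b), sq_nonneg (a - b), sq_nonneg (a ^ 2 - b ^ 2), sq_nonneg (a * b)]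

theorem abs_fourth_cumulant_le (hw₀ : ∀ t ∈ T, 0 ≤ w t) (hw : ∑ t ∈ T, w t = 1) :
    |(∑ t ∈ T, w t * (f t - ∑ u ∈ T, w u * f u) ^ 4)
        - 3 * ((∑ t ∈ T, w t * f t ^ 2) - (∑ t ∈ T, w t * f t) ^ 2) ^ 2|
      ≤ 16 * ∑ t ∈ T, w t * f t ^ 4 := by
  set m₁ := ∑ t ∈ T, w t * f t
  set m₂ := ∑ t ∈ T, w t * f t ^ 2
  set m₄ := ∑ t ∈ T, w t * f t ^ 4
  have jensen (g : ι → ℝ) : (∑ t ∈ T, w t * g t) ^ 2 ≤ ∑ t ∈ T, w t * g t ^ 2 :=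
    Real.pow_arith_mean_le_arith_mean_pow_of_even T w g hw₀ hw even_two
  have hm₁ : m₁ ^ 4 ≤ m₄ :=
    Real.pow_arith_mean_le_arith_mean_pow_of_even T w f hw₀ hw (by decide)
  have hm₂ : m₂ ^ 2 ≤ m₄ := by
    have := jensen (f · ^ 2)
    simp only [← pow_mul] at this
    exact this
  have hvar : (m₂ - m₁ ^ 2) ^ 2 ≤ m₄ :=
    (pow_le_pow_left₀ (sub_nonneg.2 (jensen f)) (by linarith [sq_nonneg m₁]) 2).trans hm₂
  have hcentral : ∑ t ∈ T, w t * (f t - m₁) ^ 4 ≤ 16 * m₄ := calc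
    _ ≤ ∑ t ∈ T, (8 * (w t * f t ^ 4) + 8 * m₁ ^ 4 * w t) := sum_le_sum fun t ht => by
        nlinarith [mul_le_mul_of_nonneg_left (sub_pow_four_le (f t) m₁) (hw₀ t ht)]
    _ = 8 * m₄ + 8 * m₁ ^ 4 := by rw [sum_add_distrib, ← mul_sum, ← mul_sum, hw, mul_one]
    _ ≤ 16 * m₄ := by linarith
  refine abs_sub_le_of_nonneg_of_le
    (sum_nonneg fun t ht => mul_nonneg (hw₀ t ht) (by positivity)) hcentral (by positivity) ?_
  linarith [sq_nonneg m₂]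

theorem sum_mul_le_sup' (hT : T.Nonempty) (hw₀ : ∀ t ∈ T, 0 ≤ w t) (hw : ∑ t ∈ T, w t = 1) :
    ∑ t ∈ T, w t * f t ≤ T.sup' hT f := calc
  _ ≤ ∑ t ∈ T, w t * T.sup' hT f :=
      sum_le_sum fun t ht => mul_le_mul_of_nonneg_left (le_sup' f ht) (hw₀ t ht)
  _ = T.sup' hT f := by rw [← sum_mul, hw, one_mul]

end WeightedMoments

section TiltedMoments

variable {ι : Type*} (T : Finset ι) (a b : ι → ℝ) (β : ℝ)

noncomputable def expSum (k : ℕ) (s : ℝ) : ℝ :=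
  ∑ t ∈ T, a t * b t ^ k * Real.exp (β * b t * s)

noncomputable def tiltedMoment (k : ℕ) (s : ℝ) : ℝ :=
  expSum T a b β k s / expSum T a b β 0 s

theorem hasDerivAt_expSum (k : ℕ) (s : ℝ) :
    HasDerivAt (expSum T a b β k) (β * expSum T a b β (k + 1) s) s := by
  have hterm (t : ι) : HasDerivAt (fun s => a t * b t ^ k * Real.exp (β * b t * s))
      (β * (a t * b t ^ (k + 1) * Real.exp (β * b t * s))) s :=
    (((hasDerivAt_id s).const_mul (β * b t)).exp.const_mul (a t * b t ^ k)).congr_deriv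
      (by simp only [id]; ring)
  unfold expSum
  rw [mul_sum]
  exact HasDerivAt.fun_sum fun t _ => hterm t

variable {T a} in
theorem expSum_zero_pos (hT : T.Nonempty) (ha : ∀ t ∈ T, 0 < a t) (s : ℝ) :
    0 < expSum T a b β 0 s :=
  sum_pos (fun t ht => by
    simpa only [pow_zero, mul_one] using mul_pos (ha t ht) (Real.exp_pos (β * b t * s))) hT

variable {T a b β}

theorem tiltedMoment_zero {s : ℝ} (h : expSum T a b β 0 s ≠ 0) : tiltedMoment T a b β 0 s = 1 :=
  div_self h

theorem hasDerivAt_tiltedMoment (k : ℕ) {s : ℝ} (h : expSum T a b β 0 s ≠ 0) :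
    HasDerivAt (tiltedMoment T a b β k)
      (β * (tiltedMoment T a b β (k + 1) s - tiltedMoment T a b β k s * tiltedMoment T a b β 1 s))
      s := by
  refine ((hasDerivAt_expSum T a b β k s).div (hasDerivAt_expSum T a b β 0 s) h).congr_deriv ?_
  simp only [tiltedMoment, zero_add]
  field_simp

theorem hasDerivAt_log_expSum (hβ : β ≠ 0) {s : ℝ} (h : expSum T a b β 0 s ≠ 0) :
    HasDerivAt (fun s => 1 / β * Real.log (expSum T a b β 0 s)) (tiltedMoment T a b β 1 s) s := by
  refine (((hasDerivAt_expSum T a b β 0 s).log h).const_mul (1 / β)).congr_deriv ?_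
  simp only [tiltedMoment, zero_add]
  field_simp

theorem iteratedDeriv_four_log_expSum (hβ : β ≠ 0) (hZ : ∀ s, expSum T a b β 0 s ≠ 0) (s : ℝ) :
    iteratedDeriv 4 (fun s => 1 / β * Real.log (expSum T a b β 0 s)) s =
      β ^ 3 * (tiltedMoment T a b β 4 s
        - 4 * tiltedMoment T a b β 3 s * tiltedMoment T a b β 1 s
        - 3 * tiltedMoment T a b β 2 s ^ 2
        + 12 * tiltedMoment T a b β 2 s * tiltedMoment T a b β 1 s ^ 2
        - 6 * tiltedMoment T a b β 1 s ^ 4) := by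
  set M := tiltedMoment T a b β
  have hM (k : ℕ) (s : ℝ) := hasDerivAt_tiltedMoment k (hZ s)
  have d₁ : deriv (fun s => 1 / β * Real.log (expSum T a b β 0 s)) = M 1 :=
    funext fun s => (hasDerivAt_log_expSum hβ (hZ s)).deriv
  have d₂ : deriv (M 1) = fun s => β * (M 2 s - M 1 s ^ 2) :=
    funext fun s => ((hM 1 s).congr_deriv (by ring)).deriv
  have d₃ : deriv (fun s => β * (M 2 s - M 1 s ^ 2)) =
      fun s => β ^ 2 * (M 3 s - 3 * M 2 s * M 1 s + 2 * M 1 s ^ 3) :=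
    funext fun s => ((((hM 2 s).sub ((hM 1 s).pow 2)).const_mul β).congr_deriv
      (by norm_num; ring)).deriv
  have d₄ : HasDerivAt (fun s => β ^ 2 * (M 3 s - 3 * M 2 s * M 1 s + 2 * M 1 s ^ 3))
      (β ^ 3 * (M 4 s - 4 * M 3 s * M 1 s - 3 * M 2 s ^ 2 + 12 * M 2 s * M 1 s ^ 2
        - 6 * M 1 s ^ 4)) s :=
    ((((hM 3 s).sub (((hM 2 s).const_mul 3).mul (hM 1 s))).add
      (((hM 1 s).pow 3).const_mul 2)).const_mul (β ^ 2)).congr_deriv (by norm_num; ring)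
  rw [iteratedDeriv_succ', d₁, iteratedDeriv_succ', d₂, iteratedDeriv_succ', d₃,
    iteratedDeriv_one, d₄.deriv]

end TiltedMoments

section CoordinateSlice

variable {ι : Type*} [Fintype ι] [DecidableEq ι]

theorem sum_update_mul {R : Type*} [CommRing R] (x y : ι → R) (i : ι) (s : R) :
    ∑ j, Function.update x i s j * y j = ∑ j, x j * y j + (s - x i) * y i := by
  have hupdate : Function.update x i s = x + Pi.single i (s - x i) := by
    ext j
    rcases eq_or_ne j i with rfl | h <;> simp [*]
  simp [hupdate, add_mul, sum_add_distrib, Pi.single_apply]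

variable (β : ℝ) (x : ι → ℝ) (i : ι)

theorem exp_mul_exp_eq_exp_update (t : ι → ℝ) (s : ℝ) :
    Real.exp (β * (∑ j, x j * t j - x i * t i)) * Real.exp (β * t i * s) =
      Real.exp (β * ∑ j, Function.update x i s j * t j) := by
  rw [sum_update_mul, ← Real.exp_add]
  congr 1
  ring

theorem tiltedMoment_update (T : Finset (ι → ℝ)) (k : ℕ) :
    tiltedMoment T (fun t => Real.exp (β * (∑ j, x j * t j - x i * t i))) (· i) β k (x i) =
      ∑ t ∈ T, Real.exp (β * ∑ j, x j * t j) / (∑ u ∈ T, Real.exp (β * ∑ j, x j * u j)) *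
        t i ^ k := by
  have hterm (k : ℕ) (t : ι → ℝ) : Real.exp (β * (∑ j, x j * t j - x i * t i)) * t i ^ k *
      Real.exp (β * t i * x i) = t i ^ k * Real.exp (β * ∑ j, x j * t j) := by
    rw [mul_right_comm, exp_mul_exp_eq_exp_update, Function.update_eq_self, mul_comm]
  simp only [tiltedMoment, expSum, hterm]
  simp only [pow_zero, one_mul, sum_div]
  exact sum_congr rfl fun t _ => by ring

end CoordinateSlice

/-- The fourth partial derivative of `F_β` in direction `e_i` equals
`β³ (E_{μ_x}[(ℓ_i - E ℓ_i)⁴] - 3 (Var ℓ_i)²)`; hence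
`|∂_i⁴ F_β(x)| ≤ 26 β³ E_{μ_x}[ℓ_i⁴] ≤ 26 β³ max_{t∈T} |t_i|⁴`. -/
theorem Fbeta_fourth_partial (n : ℕ) (T : Finset (Fin n → ℝ)) (hT : T.Nonempty)
    (β : ℝ) (hβ : 0 < β)
    (F : (Fin n → ℝ) → ℝ)
    (hF : F = fun x => (1 / β) * Real.log (∑ t ∈ T, Real.exp (β * ∑ j, x j * t j)))
    (w : (Fin n → ℝ) → (Fin n → ℝ) → ℝ)
    (hw : w = fun x t =>
      Real.exp (β * ∑ j, x j * t j) / ∑ u ∈ T, Real.exp (β * ∑ j, x j * u j)) :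
    ∀ (x : Fin n → ℝ) (i : Fin n),
      iteratedDeriv 4 (fun s => F (Function.update x i s)) (x i) =
        β ^ 3 * ((∑ t ∈ T, w x t * (t i - ∑ u ∈ T, w x u * u i) ^ 4) -
          3 * ((∑ t ∈ T, w x t * (t i) ^ 2) - (∑ t ∈ T, w x t * t i) ^ 2) ^ 2) ∧
      |iteratedDeriv 4 (fun s => F (Function.update x i s)) (x i)| ≤
        26 * β ^ 3 * ∑ t ∈ T, w x t * (t i) ^ 4 ∧
      26 * β ^ 3 * (∑ t ∈ T, w x t * (t i) ^ 4) ≤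
        26 * β ^ 3 * T.sup' hT fun t => |t i| ^ 4 := by
  intro x i
  set a : (Fin n → ℝ) → ℝ := fun t => Real.exp (β * (∑ j, x j * t j - x i * t i))
  have hslice : (fun s => F (Function.update x i s)) =
      fun s => 1 / β * Real.log (expSum T a (· i) β 0 s) := by
    funext s
    simp only [hF, expSum, pow_zero, mul_one, a, exp_mul_exp_eq_exp_update]
  have hZ (s : ℝ) : expSum T a (· i) β 0 s ≠ 0 :=
    (expSum_zero_pos _ _ hT (fun t _ => Real.exp_pos _) s).ne'
  have hmoment (k : ℕ) : tiltedMoment T a (· i) β k (x i) = ∑ t ∈ T, w x t * t i ^ k := by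
    rw [hw]
    exact tiltedMoment_update β x i T k
  have hw₀ : ∀ t ∈ T, 0 ≤ w x t := fun t _ => by rw [hw]; positivity
  have hw₁ : ∑ t ∈ T, w x t = 1 := by
    simpa only [pow_zero, mul_one, hmoment] using tiltedMoment_zero (hZ (x i))
  have hcumulant : iteratedDeriv 4 (fun s => F (Function.update x i s)) (x i) =
      β ^ 3 * ((∑ t ∈ T, w x t * (t i - ∑ u ∈ T, w x u * u i) ^ 4) -
        3 * ((∑ t ∈ T, w x t * (t i) ^ 2) - (∑ t ∈ T, w x t * t i) ^ 2) ^ 2) := by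
    rw [hslice, iteratedDeriv_four_log_expSum hβ.ne' hZ]
    simp only [hmoment, pow_one]
    rw [fourth_cumulant_eq_central _ hw₁]
  have hm₄ : 0 ≤ ∑ t ∈ T, w x t * t i ^ 4 :=
    sum_nonneg fun t ht => mul_nonneg (hw₀ t ht) (by positivity)
  refine ⟨hcumulant, ?_, ?_⟩
  · rw [hcumulant, abs_mul, abs_of_pos (pow_pos hβ 3)]
    calc _ ≤ β ^ 3 * (16 * ∑ t ∈ T, w x t * t i ^ 4) :=
          mul_le_mul_of_nonneg_left (abs_fourth_cumulant_le (· i) hw₀ hw₁) (by positivity)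
      _ ≤ _ := by linarith [mul_nonneg (pow_pos hβ 3).le hm₄]
  · gcongr
    calc ∑ t ∈ T, w x t * t i ^ 4 = ∑ t ∈ T, w x t * |t i| ^ 4 := by
          simp only [Even.pow_abs (by decide : Even 4)]
      _ ≤ _ := sum_mul_le_sup' (|· i| ^ 4) hT hw₀ hw₁
end

section
/- Let xi = (xi_1,...,xi_n) have independent coordinates with E xi_i = 0, E xi_i^2 = 1, E xi_i^3 = 0, E xi_i^4 < infinity. Then for any C^4-smooth f : R^n -> R with suitable integrability, E[L f(xi)] = sum_i E[xi_i^2 * integral_0^1 (1-s) * partial_i^4 f(xi^(i) + s*xi_i*e_i) ds] - sum_i E[(xi_i^4/2) * integral_0^1 (1-s)^2 * partial_i^4 f(xi^(i) + s*xi_i*e_i) ds], where xi^(i) = xi - xi_i e_i. -/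
/-!
Fix a coordinate `i` and put `ξ⁽ⁱ⁾ = update ξ i 0`. Taylor's formula with integral remainder
along the `i`-th coordinate line expands `∂ᵢ²f(ξ)` to first order and `∂ᵢf(ξ)` to second order
around `ξ⁽ⁱ⁾`. As `ξᵢ` is independent of `ξ⁽ⁱ⁾`, every polynomial term `ξᵢᵏ ∂ᵢᵐf(ξ⁽ⁱ⁾)` has
expectation `E[ξᵢᵏ] E[∂ᵢᵐf(ξ⁽ⁱ⁾)]`. With `E ξᵢ = E ξᵢ³ = 0` and `E ξᵢ² = 1` the only surviving
polynomial term is `E[∂ᵢ²f(ξ⁽ⁱ⁾)]`, which occurs in both expansions and cancels in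
`E[∂ᵢ²f(ξ) - ξᵢ ∂ᵢf(ξ)]`, leaving the two remainders.
-/

open Finset MeasureTheory ProbabilityTheory Function
open scoped Nat

theorem iteratedDeriv_comp_add_smul {𝕜 E F : Type*} [NontriviallyNormedField 𝕜]
    [NormedAddCommGroup E] [NormedSpace 𝕜 E] [NormedAddCommGroup F] [NormedSpace 𝕜 F]
    {f : E → F} {k : ℕ} (hf : ContDiff 𝕜 k f) (c e : E) :
    iteratedDeriv k (fun s : 𝕜 => f (c + s • e)) =
      fun t => iteratedFDeriv 𝕜 k f (c + t • e) (fun _ => e) := by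
  induction k with
  | zero => ext; simp
  | succ k ih =>
    rw [iteratedDeriv_succ, ih (hf.of_le (by norm_cast; omega))]
    ext t
    exact hf.contDiffAt.deriv_fderiv_add_smul

theorem iteratedDeriv_eq_sum_add_integral {g : ℝ → ℝ} {m n : ℕ}
    (hg : ContDiff ℝ (m + n + 1) g) (t : ℝ) :
    iteratedDeriv m g t =
      ∑ k ∈ range (n + 1), t ^ k * iteratedDeriv (m + k) g 0 / k ! +
        t ^ (n + 1) * (∫ s in (0:ℝ)..1, (1 - s) ^ n * iteratedDeriv (m + n + 1) g (s * t)) /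
          n ! := by
  have hgm : ContDiff ℝ (n + 1) (iteratedDeriv m g) := by
    rw [iteratedDeriv_eq_equiv_comp]
    exact (LinearIsometryEquiv.contDiff _).comp (hg.iteratedFDeriv_right (le_of_eq (by ring)))
  have hder : ∀ k, iteratedDeriv k (iteratedDeriv m g) = iteratedDeriv (m + k) g := by
    intro k
    simp only [iteratedDeriv_eq_iterate, ← iterate_add_apply, add_comm m]
  have h := map_add_eq_sum_add_integral_iteratedFDeriv (x := (0:ℝ)) (y := t)
    (fun s _ => hgm.contDiffAt)
  simp only [zero_add, iteratedFDeriv_apply_eq_iteratedDeriv_mul_prod, prod_const,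
    Finset.card_fin, smul_eq_mul, hder, ← add_assoc, mul_left_comm _ (t ^ (n + 1)),
    intervalIntegral.integral_const_mul] at h
  rw [h]
  congr 1
  · exact sum_congr rfl fun k _ => by ring
  · ring

theorem abs_integral_one_sub_pow_mul_le {g : ℝ → ℝ} {B : ℝ} (hg : ∀ s, |g s| ≤ B) (n : ℕ) :
    |∫ s in (0:ℝ)..1, (1 - s) ^ n * g s| ≤ B := by
  have hbound : ∀ s ∈ Set.uIoc (0:ℝ) 1, ‖(1 - s) ^ n * g s‖ ≤ B := by
    intro s hs
    rw [Set.uIoc_of_le zero_le_one] at hs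
    have hs' : |1 - s| ≤ 1 := abs_le.2 ⟨by linarith [hs.2], by linarith [hs.1]⟩
    rw [Real.norm_eq_abs, abs_mul, abs_pow]
    exact (mul_le_of_le_one_left (abs_nonneg _) (pow_le_one₀ (abs_nonneg _) hs')).trans (hg s)
  simpa using intervalIntegral.norm_integral_le_of_norm_le_const hbound

theorem update_eq_update_zero_add_smul_single {ι R : Type*} [DecidableEq ι] [Semiring R]
    (x : ι → R) (i : ι) (t : R) :
    update x i t = update x i 0 + t • Pi.single i 1 := by
  ext j
  by_cases h : j = i
  · subst h; simp
  · simp [h]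

section CoordinateDerivatives

variable {ι : Type*} [DecidableEq ι]

noncomputable def coordIteratedDeriv (f : (ι → ℝ) → ℝ) (k : ℕ) (i : ι) (x : ι → ℝ) : ℝ :=
  iteratedDeriv k (fun s => f (update x i s)) (x i)

noncomputable def coordTaylorRemainder (f : (ι → ℝ) → ℝ) (k n : ℕ) (i : ι) (x : ι → ℝ) : ℝ :=
  ∫ s in (0:ℝ)..1, (1 - s) ^ n * coordIteratedDeriv f k i (update x i (s * x i))

theorem coordIteratedDeriv_update (f : (ι → ℝ) → ℝ) (k : ℕ) (i : ι) (x : ι → ℝ) (t : ℝ) :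
    coordIteratedDeriv f k i (update x i t) = iteratedDeriv k (fun s => f (update x i s)) t := by
  simp [coordIteratedDeriv]

theorem coordIteratedDeriv_eq_iteratedFDeriv [Fintype ι] {f : (ι → ℝ) → ℝ} {k : ℕ}
    (hf : ContDiff ℝ k f) (i : ι) (x : ι → ℝ) :
    coordIteratedDeriv f k i x = iteratedFDeriv ℝ k f x (fun _ => Pi.single i 1) := by
  have hline := iteratedDeriv_comp_add_smul hf (update x i 0) (Pi.single i (1 : ℝ))
  simp only [← update_eq_update_zero_add_smul_single] at hline
  simp only [coordIteratedDeriv, hline, update_eq_self]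

theorem continuous_coordIteratedDeriv [Fintype ι] {f : (ι → ℝ) → ℝ} {k : ℕ}
    (hf : ContDiff ℝ k f) (i : ι) : Continuous (coordIteratedDeriv f k i) := by
  simp_rw [funext (coordIteratedDeriv_eq_iteratedFDeriv hf i)]
  exact (hf.continuous_iteratedFDeriv le_rfl).eval_const _

theorem continuous_coordTaylorRemainder [Fintype ι] {f : (ι → ℝ) → ℝ} {k : ℕ}
    (hf : ContDiff ℝ k f) (n : ℕ) (i : ι) : Continuous (coordTaylorRemainder f k n i) := by
  have := continuous_coordIteratedDeriv hf i
  unfold coordTaylorRemainder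
  fun_prop

theorem abs_coordTaylorRemainder_le {f : (ι → ℝ) → ℝ} {k : ℕ} {i : ι} {B : ℝ}
    (hB : ∀ x, |coordIteratedDeriv f k i x| ≤ B) (n : ℕ) (x : ι → ℝ) :
    |coordTaylorRemainder f k n i x| ≤ B :=
  abs_integral_one_sub_pow_mul_le (fun _ => hB _) n

theorem coordIteratedDeriv_eq_sum_add_remainder [Fintype ι] {f : (ι → ℝ) → ℝ} {m n : ℕ}
    (hf : ContDiff ℝ (m + n + 1) f) (i : ι) (x : ι → ℝ) :
    coordIteratedDeriv f m i x =
      ∑ k ∈ range (n + 1), x i ^ k * coordIteratedDeriv f (m + k) i (update x i 0) / k ! +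
        x i ^ (n + 1) * coordTaylorRemainder f (m + n + 1) n i x / n ! := by
  have h := iteratedDeriv_eq_sum_add_integral (g := fun s => f (update x i s))
    (hf.comp (contDiff_update _ x i)) (x i)
  simpa only [coordTaylorRemainder, ← coordIteratedDeriv_update, update_eq_self] using h

end CoordinateDerivatives

section Probability

variable {Ω : Type*} [MeasurableSpace Ω] {μ : Measure Ω}

theorem integrable_pow_of_le [IsFiniteMeasure μ] {X : Ω → ℝ} (hX : AEStronglyMeasurable X μ)
    {m p : ℕ} (hmp : m ≤ p) (hXp : Integrable (fun ω => X ω ^ p) μ) :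
    Integrable (fun ω => X ω ^ m) μ := by
  have h := integrable_norm_pow_of_le hX hmp (by simpa only [norm_pow] using hXp.norm)
  exact h.mono' (hX.pow m) (ae_of_all _ fun ω => (norm_pow (X ω) m).le)

theorem integrable_pow_mul_of_abs_le [IsFiniteMeasure μ] {X Z : Ω → ℝ}
    (hX : AEStronglyMeasurable X μ) {m p : ℕ} (hmp : m ≤ p) (hXp : Integrable (fun ω => X ω ^ p) μ)
    (hZ : AEStronglyMeasurable Z μ) {B : ℝ} (hZB : ∀ ω, |Z ω| ≤ B) :
    Integrable (fun ω => X ω ^ m * Z ω) μ :=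
  (integrable_pow_of_le hX hmp hXp).mul_bdd hZ (ae_of_all _ hZB)

theorem ProbabilityTheory.iIndepFun.indepFun_apply_update {ι β : Type*} [Fintype ι]
    [DecidableEq ι] [MeasurableSpace β] {ξ : Ω → ι → β} (hindep : iIndepFun (fun i ω => ξ ω i) μ)
    (hmeas : ∀ i, Measurable fun ω => ξ ω i) (i : ι) (c : β) :
    IndepFun (fun ω => ξ ω i) (fun ω => update (ξ ω) i c) μ := by
  have h := hindep.indepFun_finset {i} {i}ᶜ disjoint_compl_right hmeas
  have hψ : Measurable fun (v : ({i}ᶜ : Finset ι) → β) (j : ι) =>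
      if hj : j ∈ ({i}ᶜ : Finset ι) then v ⟨j, hj⟩ else c := by
    refine measurable_pi_lambda _ fun j => ?_
    split <;> fun_prop
  convert h.comp (measurable_pi_apply ⟨i, mem_singleton_self i⟩) hψ using 1
  · rfl
  funext ω j
  by_cases hj : j = i
  · subst hj; simp
  · simp [hj]

section CoordinateExpectations

variable {ι : Type*} [Fintype ι] [DecidableEq ι] {ξ : Ω → ι → ℝ}

theorem integrable_pow_mul_coordIteratedDeriv [IsFiniteMeasure μ]
    (hmeas : ∀ i, Measurable fun ω => ξ ω i) {i : ι} {p l k : ℕ}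
    (hξp : Integrable (fun ω => ξ ω i ^ p) μ) (hl : l ≤ p) {f : (ι → ℝ) → ℝ}
    (hf : ContDiff ℝ k f) {B : ℝ} (hB : ∀ x, |coordIteratedDeriv f k i x| ≤ B) :
    Integrable (fun ω => ξ ω i ^ l * coordIteratedDeriv f k i (ξ ω)) μ :=
  integrable_pow_mul_of_abs_le (hmeas i).aestronglyMeasurable hl hξp
    ((continuous_coordIteratedDeriv hf i).measurable.comp
      (measurable_pi_lambda _ hmeas)).aestronglyMeasurable (fun _ => hB _)

theorem integral_pow_mul_coordIteratedDeriv [IsFiniteMeasure μ]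
    (hmeas : ∀ i, Measurable fun ω => ξ ω i) (hindep : iIndepFun (fun i ω => ξ ω i) μ)
    {i : ι} {p l m n : ℕ} (hξp : Integrable (fun ω => ξ ω i ^ p) μ) (hp : l + n + 1 ≤ p)
    {f : (ι → ℝ) → ℝ} (hf : ContDiff ℝ (m + n + 1) f) {B : ℝ}
    (hB : ∀ k ≤ m + n + 1, ∀ x, |coordIteratedDeriv f k i x| ≤ B) :
    ∫ ω, ξ ω i ^ l * coordIteratedDeriv f m i (ξ ω) ∂μ =
      ∑ k ∈ range (n + 1), (∫ ω, ξ ω i ^ (l + k) ∂μ) *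
          (∫ ω, coordIteratedDeriv f (m + k) i (update (ξ ω) i 0) ∂μ) / k ! +
        (∫ ω, ξ ω i ^ (l + n + 1) * coordTaylorRemainder f (m + n + 1) n i (ξ ω) ∂μ) / n ! := by
  have hX : AEStronglyMeasurable (fun ω => ξ ω i) μ := (hmeas i).aestronglyMeasurable
  have hξ : Measurable ξ := measurable_pi_lambda _ hmeas
  have hcont : ∀ k ≤ m + n + 1, Continuous (coordIteratedDeriv f k i) := fun k hk =>
    continuous_coordIteratedDeriv (hf.of_le (by exact_mod_cast hk)) i
  have hY : ∀ k ≤ m + n + 1,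
      AEStronglyMeasurable (fun ω => coordIteratedDeriv f k i (update (ξ ω) i 0)) μ := fun k hk =>
    ((hcont k hk).measurable.comp (measurable_update_left.comp hξ)).aestronglyMeasurable
  have hterm : ∀ k ∈ range (n + 1), Integrable (fun ω =>
      ξ ω i ^ (l + k) * coordIteratedDeriv f (m + k) i (update (ξ ω) i 0) / k !) μ := by
    intro k hk
    have hk := mem_range.1 hk
    exact (integrable_pow_mul_of_abs_le hX (by omega) hξp (hY _ (by omega))
      (fun ω => hB _ (by omega) _)).div_const _
  have hrem : Integrable (fun ω =>
      ξ ω i ^ (l + n + 1) * coordTaylorRemainder f (m + n + 1) n i (ξ ω) / n !) μ :=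
    (integrable_pow_mul_of_abs_le hX hp hξp
      ((continuous_coordTaylorRemainder hf n i).measurable.comp hξ).aestronglyMeasurable
      (fun ω => abs_coordTaylorRemainder_le (hB _ le_rfl) n _)).div_const _
  have hindep_update := hindep.indepFun_apply_update hmeas i 0
  calc ∫ ω, ξ ω i ^ l * coordIteratedDeriv f m i (ξ ω) ∂μ
      = ∫ ω, (∑ k ∈ range (n + 1),
            ξ ω i ^ (l + k) * coordIteratedDeriv f (m + k) i (update (ξ ω) i 0) / k ! +
          ξ ω i ^ (l + n + 1) * coordTaylorRemainder f (m + n + 1) n i (ξ ω) / n !) ∂μ := by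
        refine integral_congr_ae (ae_of_all _ fun ω => ?_)
        dsimp only
        rw [coordIteratedDeriv_eq_sum_add_remainder hf, mul_add, mul_sum]
        congr 1
        · exact sum_congr rfl fun k _ => by ring
        · ring
    _ = _ := by
        rw [integral_add (integrable_finsetSum _ hterm) hrem, integral_finsetSum _ hterm,
          integral_div]
        congr 1
        refine sum_congr rfl fun k hk => ?_
        have hk : m + k ≤ m + n + 1 := by have := mem_range.1 hk; omega
        rw [integral_div]
        congr 1
        exact (hindep_update.comp (by fun_prop : Measurable fun x : ℝ => x ^ (l + k))
          (hcont _ hk).measurable).integral_fun_mul_eq_mul_integral (hX.pow _) (hY _ hk)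

theorem integral_coordIteratedDeriv_two_sub_mul_one [IsProbabilityMeasure μ]
    (hmeas : ∀ i, Measurable fun ω => ξ ω i) (hindep : iIndepFun (fun i ω => ξ ω i) μ)
    {i : ι} (hm1 : ∫ ω, ξ ω i ∂μ = 0) (hm2 : ∫ ω, ξ ω i ^ 2 ∂μ = 1)
    (hm3 : ∫ ω, ξ ω i ^ 3 ∂μ = 0) (hm4 : Integrable (fun ω => ξ ω i ^ 4) μ)
    {f : (ι → ℝ) → ℝ} (hf : ContDiff ℝ 4 f) {B : ℝ}
    (hB : ∀ k ≤ 4, ∀ x, |coordIteratedDeriv f k i x| ≤ B) :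
    ∫ ω, (coordIteratedDeriv f 2 i (ξ ω) - ξ ω i * coordIteratedDeriv f 1 i (ξ ω)) ∂μ =
      ∫ ω, ξ ω i ^ 2 * coordTaylorRemainder f 4 1 i (ξ ω) ∂μ -
        ∫ ω, ξ ω i ^ 4 / 2 * coordTaylorRemainder f 4 2 i (ξ ω) ∂μ := by
  have hsecond := integral_pow_mul_coordIteratedDeriv (l := 0) (m := 2) (n := 1) hmeas hindep
    hm4 (by norm_num) hf hB
  have hfirst := integral_pow_mul_coordIteratedDeriv (l := 1) (m := 1) (n := 2) hmeas hindep
    hm4 le_rfl hf hB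
  simp only [pow_zero, one_mul, Nat.reduceAdd, zero_add, sum_range_succ, range_one, sum_singleton,
    integral_const, probReal_univ, smul_eq_mul, mul_one, add_zero, Nat.factorial_zero, Nat.cast_one,
    div_one, pow_one, hm1, zero_mul, Nat.factorial_one, hm2, hm3, Nat.factorial_two, Nat.cast_ofNat,
    zero_div] at hsecond hfirst
  have hint2 := integrable_pow_mul_coordIteratedDeriv (l := 0) hmeas hm4 (by norm_num)
    (hf.of_le (by norm_num)) (hB 2 (by norm_num))
  have hint1 := integrable_pow_mul_coordIteratedDeriv (l := 1) hmeas hm4 (by norm_num)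
    (hf.of_le (by norm_num)) (hB 1 (by norm_num))
  simp only [pow_zero, one_mul, pow_one] at hint2 hint1
  rw [integral_sub hint2 hint1, hsecond, hfirst]
  simp_rw [div_mul_eq_mul_div, integral_div]
  ring

end CoordinateExpectations

end Probability

theorem stein_formula_fourth_order_general (n : ℕ)
    {Ω : Type*} [MeasurableSpace Ω] (μ : Measure Ω) [IsProbabilityMeasure μ]
    (ξ : Ω → Fin n → ℝ) (hmeas : ∀ i, Measurable fun ω => ξ ω i)
    (hindep : iIndepFun (fun i ω => ξ ω i) μ)
    (hm1 : ∀ i, ∫ ω, ξ ω i ∂μ = 0)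
    (hm2 : ∀ i, ∫ ω, (ξ ω i) ^ 2 ∂μ = 1)
    (hm3 : ∀ i, ∫ ω, (ξ ω i) ^ 3 ∂μ = 0)
    (hm4 : ∀ i, Integrable (fun ω => (ξ ω i) ^ 4) μ)
    (f : (Fin n → ℝ) → ℝ) (hf : ContDiff ℝ 4 f)
    (pd : ℕ → Fin n → (Fin n → ℝ) → ℝ)
    (hpd : pd = fun k i x => iteratedDeriv k (fun s => f (Function.update x i s)) (x i))
    (B : ℝ) (hbddpd : ∀ k ≤ 4, ∀ i x, |pd k i x| ≤ B)
    (L : (Fin n → ℝ) → ℝ)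
    (hL : L = fun x => (∑ i, pd 2 i x) - ∑ i, x i * pd 1 i x) :
    ∫ ω, L (ξ ω) ∂μ =
      (∑ i, ∫ ω, (ξ ω i) ^ 2 *
        ∫ s in (0:ℝ)..1, (1 - s) * pd 4 i (Function.update (ξ ω) i (s * ξ ω i)) ∂volume ∂μ) -
      ∑ i, ∫ ω, ((ξ ω i) ^ 4 / 2) *
        ∫ s in (0:ℝ)..1, (1 - s) ^ 2 * pd 4 i (Function.update (ξ ω) i (s * ξ ω i)) ∂volume ∂μ := by
  obtain rfl : pd = coordIteratedDeriv f := hpd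
  subst hL
  have hint : ∀ i, Integrable (fun ω =>
      coordIteratedDeriv f 2 i (ξ ω) - ξ ω i * coordIteratedDeriv f 1 i (ξ ω)) μ := by
    intro i
    have hint2 := integrable_pow_mul_coordIteratedDeriv (l := 0) hmeas (hm4 i) (by norm_num)
      (hf.of_le (by norm_num)) (hbddpd 2 (by norm_num) i)
    have hint1 := integrable_pow_mul_coordIteratedDeriv (l := 1) hmeas (hm4 i) (by norm_num)
      (hf.of_le (by norm_num)) (hbddpd 1 (by norm_num) i)
    simp only [pow_zero, one_mul, pow_one] at hint2 hint1
    exact hint2.sub hint1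
  calc ∫ ω, ((∑ i, coordIteratedDeriv f 2 i (ξ ω)) - ∑ i, ξ ω i * coordIteratedDeriv f 1 i (ξ ω)) ∂μ
      = ∑ i, ∫ ω, (coordIteratedDeriv f 2 i (ξ ω) - ξ ω i * coordIteratedDeriv f 1 i (ξ ω)) ∂μ := by
        simp_rw [← sum_sub_distrib]
        exact integral_finsetSum _ fun i _ => hint i
    _ = ∑ i, (∫ ω, ξ ω i ^ 2 * coordTaylorRemainder f 4 1 i (ξ ω) ∂μ -
          ∫ ω, ξ ω i ^ 4 / 2 * coordTaylorRemainder f 4 2 i (ξ ω) ∂μ) :=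
        sum_congr rfl fun i _ => integral_coordIteratedDeriv_two_sub_mul_one hmeas hindep (hm1 i)
          (hm2 i) (hm3 i) (hm4 i) hf fun k hk => hbddpd k hk i
    _ = _ := by simp only [sum_sub_distrib, coordTaylorRemainder, pow_one]

/-- Fourth-order Stein-type formula for the Ornstein–Uhlenbeck generator
`L f(x) = Δf(x) - ⟨x, ∇f(x)⟩`: if `ξ` has independent coordinates with
`Eξᵢ = Eξᵢ³ = 0`, `Eξᵢ² = 1`, `Eξᵢ⁴ < ∞`, then for `C⁴`-smooth `f` with bounded
derivatives up to order 4,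
`E[Lf(ξ)] = ∑ᵢ E[ξᵢ² ∫₀¹ (1-s) ∂ᵢ⁴f(ξ⁽ⁱ⁾ + sξᵢeᵢ) ds]
  - ∑ᵢ E[(ξᵢ⁴/2) ∫₀¹ (1-s)² ∂ᵢ⁴f(ξ⁽ⁱ⁾ + sξᵢeᵢ) ds]`. -/
theorem stein_formula_fourth_order (n : ℕ)
    {Ω : Type*} [MeasurableSpace Ω] (μ : Measure Ω) [IsProbabilityMeasure μ]
    (ξ : Ω → Fin n → ℝ) (hmeas : ∀ i, Measurable fun ω => ξ ω i)
    (hindep : iIndepFun (fun i ω => ξ ω i) μ)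
    (hm1 : ∀ i, ∫ ω, ξ ω i ∂μ = 0)
    (hm2 : ∀ i, ∫ ω, (ξ ω i) ^ 2 ∂μ = 1)
    (hm3 : ∀ i, ∫ ω, (ξ ω i) ^ 3 ∂μ = 0)
    (hm4 : ∀ i, Integrable (fun ω => (ξ ω i) ^ 4) μ)
    (f : (Fin n → ℝ) → ℝ) (hf : ContDiff ℝ 4 f)
    (pd : ℕ → Fin n → (Fin n → ℝ) → ℝ)
    (hpd : pd = fun k i x => iteratedDeriv k (fun s => f (Function.update x i s)) (x i))
    (B : ℝ) (hbdd : ∀ x, |f x| ≤ B) (hbddpd : ∀ k ≤ 4, ∀ i x, |pd k i x| ≤ B)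
    (L : (Fin n → ℝ) → ℝ)
    (hL : L = fun x => (∑ i, pd 2 i x) - ∑ i, x i * pd 1 i x) :
    ∫ ω, L (ξ ω) ∂μ =
      (∑ i, ∫ ω, (ξ ω i) ^ 2 *
        ∫ s in (0:ℝ)..1, (1 - s) * pd 4 i (Function.update (ξ ω) i (s * ξ ω i)) ∂volume ∂μ) -
      ∑ i, ∫ ω, ((ξ ω i) ^ 4 / 2) *
        ∫ s in (0:ℝ)..1, (1 - s) ^ 2 * pd 4 i (Function.update (ξ ω) i (s * ξ ω i)) ∂volume ∂μ :=
  stein_formula_fourth_order_general n μ ξ hmeas hindep hm1 hm2 hm3 hm4 f hf pd hpd B hbddpd L hL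
end

section
/- Let T = { e_i : 1 <= i <= n } be the canonical basis of R^n and let xi_1,...,xi_n be i.i.d. standard Laplace random variables (density (1/2)exp(-|x|)). Then E max_{i<=n} xi_i is of order log n (i.e., there are universal constants c, C > 0 with c*log n <= E max_i xi_i <= C*log n for n large), whereas E max_{i<=n} g_i is of order sqrt(log n) for i.i.d. standard Gaussians g_i; consequently |E sup_{t in T}<xi,t> - E sup_{t in T}<G,t>| >= c' * log n for n large, which exceeds any bound of order (log n)^{3/4}. -/
/-!
Write `n` for the number of coordinates. The maximum exceeds a level `a` unless every coordinate
stays below it, which happens with probability `(1 - P(ξ > a))ⁿ ≤ 1/2` once `n P(ξ > a) ≥ 1`;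
bounding the maximum from below by `a·1{max > a} - |ξ₁|` gives `E max ≥ a/2 - E|ξ|`. From above,
`max ≤ a + ∑ (ξᵢ - a)⁺` gives `E max ≤ a + n E(ξ - a)⁺`. The Laplace tail `≍ e^{-a}` makes both
bounds work at levels `a ≍ log n`, the Gaussian tail `≍ e^{-a²/2}` at `a ≍ √(log n)`, and the two
orders differ by a factor `√(log n)`, which produces the gap.
-/

open MeasureTheory ProbabilityTheory

/-- The standard Laplace (two-sided exponential) distribution, with density
`(1/2)·exp(-|x|)` with respect to Lebesgue measure. -/
noncomputable def laplaceMeasure : Measure ℝ :=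
  volume.withDensity fun x => ENNReal.ofReal ((1 / 2) * Real.exp (-|x|))

open Real Set

section IIDMaximum

variable {ι : Type*} [Fintype ι] {μ : Measure ℝ} [IsProbabilityMeasure μ]

lemma integral_comp_eval_pi {f : ℝ → ℝ} (hf : AEStronglyMeasurable f μ) (i : ι) :
    ∫ x, f (x i) ∂(Measure.pi fun _ : ι => μ) = ∫ y, f y ∂μ := by
  have hmap := measurePreserving_eval (fun _ : ι => μ) i
  rw [← hmap.map_eq] at hf
  conv_rhs => rw [← hmap.map_eq]
  exact (integral_map hmap.measurable.aemeasurable hf).symm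

lemma integrable_comp_eval_pi {f : ℝ → ℝ} (hf : Integrable f μ) (i : ι) :
    Integrable (fun x => f (x i)) (Measure.pi fun _ : ι => μ) :=
  (measurePreserving_eval _ i).integrable_comp_of_integrable hf

lemma one_sub_pow_le_half {p : ℝ} {n : ℕ} (hp : p ≤ 1) (hnp : 1 ≤ n * p) :
    (1 - p) ^ n ≤ 1 / 2 := by
  have hn : (n : ℝ) ≠ 0 := by rintro h; simp [h] at hnp; linarith
  calc (1 - p) ^ n = (1 - n * p / n) ^ n := by rw [mul_div_cancel_left₀ _ hn]
    _ ≤ exp (-(n * p)) := one_sub_div_pow_le_exp_neg (by nlinarith [Nat.cast_nonneg (α := ℝ) n])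
    _ ≤ exp (-1) := exp_le_exp.mpr (by linarith)
    _ ≤ 1 / 2 := exp_neg_one_lt_half.le

variable [Nonempty ι]

lemma abs_iSup_le_sum_abs (x : ι → ℝ) : |⨆ i, x i| ≤ ∑ i, |x i| := by
  have hsingle : ∀ i, |x i| ≤ ∑ j, |x j| := fun i =>
    Finset.single_le_sum (fun j _ => abs_nonneg (x j)) (Finset.mem_univ i)
  obtain ⟨i₀⟩ := ‹Nonempty ι›
  refine abs_le.mpr ⟨?_, ciSup_le fun i => (le_abs_self _).trans (hsingle i)⟩
  calc -∑ j, |x j| ≤ x i₀ := by linarith [neg_abs_le (x i₀), hsingle i₀]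
    _ ≤ ⨆ i, x i := le_ciSup (Finite.bddAbove_range x) i₀

lemma integrable_iSup_pi (h : Integrable id μ) :
    Integrable (fun x : ι → ℝ => ⨆ i, x i) (Measure.pi fun _ : ι => μ) :=
  (integrable_finsetSum _ fun i _ => integrable_comp_eval_pi h.abs i).mono'
    (Measurable.iSup measurable_pi_apply).aestronglyMeasurable
    (ae_of_all _ fun x => (Real.norm_eq_abs _).trans_le (abs_iSup_le_sum_abs x))

theorem integral_iSup_pi_le (h : Integrable id μ) (a : ℝ) :
    ∫ x, (⨆ i, x i) ∂(Measure.pi fun _ : ι => μ) ≤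
      a + Fintype.card ι * ∫ y, max (y - a) 0 ∂μ := by
  have hexcess : Integrable (fun y : ℝ => max (y - a) 0) μ :=
    (h.sub (integrable_const a)).sup (integrable_const 0)
  have hdom : ∀ x : ι → ℝ, ⨆ i, x i ≤ a + ∑ i, max (x i - a) 0 := fun x =>
    ciSup_le fun i => by
      have := Finset.single_le_sum (f := fun j => max (x j - a) 0)
        (fun j _ => le_max_right _ _) (Finset.mem_univ i)
      linarith [le_max_left (x i - a) 0]
  have hsum :=
    integrable_finsetSum Finset.univ fun i _ => integrable_comp_eval_pi (ι := ι) hexcess i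
  calc _ ≤ ∫ x, (a + ∑ i, max (x i - a) 0) ∂(Measure.pi fun _ : ι => μ) :=
        integral_mono (integrable_iSup_pi h) ((integrable_const a).add hsum) hdom
    _ = _ := by
      rw [integral_add (integrable_const a) hsum, integral_finsetSum _ fun i _ =>
        integrable_comp_eval_pi hexcess i]
      simp [integral_comp_eval_pi hexcess.aestronglyMeasurable]

theorem le_integral_iSup_pi (h : Integrable id μ) (a : ℝ) :
    a * (1 - μ.real (Iic a) ^ Fintype.card ι) - ∫ y, |y| ∂μ ≤
      ∫ x, (⨆ i, x i) ∂(Measure.pi fun _ : ι => μ) := by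
  set P := Measure.pi fun _ : ι => μ
  set S : Set (ι → ℝ) := (univ.pi fun _ => Iic a)ᶜ
  have hS : MeasurableSet S := (MeasurableSet.univ_pi fun _ => measurableSet_Iic).compl
  have hPS : P.real S = 1 - μ.real (Iic a) ^ Fintype.card ι := by
    rw [probReal_compl_eq_one_sub (MeasurableSet.univ_pi fun _ => measurableSet_Iic)]
    simp only [P, Measure.real, Measure.pi_pi, Finset.prod_const, ENNReal.toReal_pow,
      Finset.card_univ]
  obtain ⟨i₀⟩ := ‹Nonempty ι›
  have hind : Integrable (S.indicator fun _ => a) P := (integrable_const a).indicator hS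
  have habs := integrable_comp_eval_pi (f := fun y => |y|) (ι := ι) h.abs i₀
  have hdom : ∀ x : ι → ℝ, S.indicator (fun _ => a) x - |x i₀| ≤ ⨆ i, x i := by
    intro x
    by_cases hx : x ∈ S
    · obtain ⟨i, hi⟩ : ∃ i, a < x i := by
        simpa only [S, mem_compl_iff, mem_univ_pi, mem_Iic, not_forall, not_le] using hx
      rw [indicator_of_mem hx]
      linarith [abs_nonneg (x i₀), le_ciSup (Finite.bddAbove_range x) i]
    · rw [indicator_of_notMem hx]
      linarith [neg_abs_le (x i₀), le_ciSup (Finite.bddAbove_range x) i₀]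
  calc _ = ∫ x, (S.indicator (fun _ => a) x - |x i₀|) ∂P := by
        rw [integral_sub hind habs, integral_indicator_const _ hS,
          integral_comp_eval_pi (f := fun y => |y|) h.abs.aestronglyMeasurable, hPS,
          smul_eq_mul, mul_comm]
    _ ≤ _ := integral_mono (hind.sub habs) (integrable_iSup_pi h) hdom

theorem half_sub_le_integral_iSup_pi (h : Integrable id μ) {a : ℝ} (ha : 0 ≤ a)
    (htail : 1 ≤ Fintype.card ι * μ.real (Ioi a)) :
    a / 2 - ∫ y, |y| ∂μ ≤ ∫ x, (⨆ i, x i) ∂(Measure.pi fun _ : ι => μ) := by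
  have hIic : μ.real (Iic a) = 1 - μ.real (Ioi a) := by
    rw [← compl_Ioi, probReal_compl_eq_one_sub measurableSet_Ioi]
  have hpow : μ.real (Iic a) ^ Fintype.card ι ≤ 1 / 2 :=
    hIic ▸ one_sub_pow_le_half measureReal_le_one htail
  nlinarith [le_integral_iSup_pi (ι := ι) h a]

end IIDMaximum

section Density

variable {d : ℝ → ℝ}

lemma integral_withDensity_ofReal (hd : Measurable d) (hd0 : ∀ x, 0 ≤ d x) (g : ℝ → ℝ) :
    ∫ x, g x ∂(volume.withDensity fun x => ENNReal.ofReal (d x)) = ∫ x, d x * g x := by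
  rw [integral_withDensity_eq_integral_toReal_smul hd.ennreal_ofReal
    (ae_of_all _ fun _ => ENNReal.ofReal_lt_top)]
  simp only [ENNReal.toReal_ofReal (hd0 _), smul_eq_mul]

variable {g h : ℝ → ℝ}

lemma integrable_withDensity_ofReal_of_mul_le (hd : Measurable d) (hd0 : ∀ x, 0 ≤ d x)
    (hg : Measurable g) (hg0 : ∀ x, 0 ≤ g x) (hh : Integrable h) (hgh : ∀ x, d x * g x ≤ h x) :
    Integrable g (volume.withDensity fun x => ENNReal.ofReal (d x)) := by
  rw [integrable_withDensity_iff hd.ennreal_ofReal (ae_of_all _ fun _ => ENNReal.ofReal_lt_top)]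
  refine hh.mono' (hg.mul hd.ennreal_ofReal.ennreal_toReal).aestronglyMeasurable
    (ae_of_all _ fun x => ?_)
  rw [ENNReal.toReal_ofReal (hd0 x), Real.norm_of_nonneg (mul_nonneg (hg0 x) (hd0 x)), mul_comm]
  exact hgh x

lemma integral_withDensity_ofReal_le_of_mul_le (hd : Measurable d) (hd0 : ∀ x, 0 ≤ d x)
    (hg0 : ∀ x, 0 ≤ g x) (hh : Integrable h) (hgh : ∀ x, d x * g x ≤ h x) :
    ∫ x, g x ∂(volume.withDensity fun x => ENNReal.ofReal (d x)) ≤ ∫ x, h x := by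
  rw [integral_withDensity_ofReal hd hd0]
  exact integral_mono_of_nonneg (ae_of_all _ fun x => mul_nonneg (hd0 x) (hg0 x)) hh
    (ae_of_all _ hgh)

lemma ofReal_le_withDensity_ofReal_Ioi (hd : Measurable d) {a ε : ℝ}
    (hε : ∀ x ∈ Ioc a (a + 1), ε ≤ d x) :
    ENNReal.ofReal ε ≤ (volume.withDensity fun x => ENNReal.ofReal (d x)) (Ioi a) := by
  calc ENNReal.ofReal ε = ∫⁻ _ in Ioc a (a + 1), ENNReal.ofReal ε := by simp
    _ ≤ ∫⁻ x in Ioc a (a + 1), ENNReal.ofReal (d x) :=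
        setLIntegral_mono hd.ennreal_ofReal fun x hx => ENNReal.ofReal_le_ofReal (hε x hx)
    _ = _ := (withDensity_apply _ measurableSet_Ioc).symm
    _ ≤ _ := measure_mono Ioc_subset_Ioi_self

end Density

lemma le_two_mul_exp_half (y : ℝ) : y ≤ 2 * exp (y / 2) := by
  linarith [add_one_le_exp (y / 2)]

section Laplace

lemma integral_exp_neg_mul_abs {b : ℝ} (hb : 0 < b) : ∫ x : ℝ, exp (-(b * |x|)) = 2 / b := by
  rw [integral_comp_abs (f := fun t => exp (-(b * t))),
    integral_comp_mul_left_Ioi (fun u => exp (-u)) 0 hb, mul_zero, integral_exp_neg_Ioi_zero,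
    smul_eq_mul, mul_one, div_eq_mul_inv]

-- The integral is nonzero, so by the junk-value convention the integrand is integrable.
lemma integrable_exp_neg_mul_abs {b : ℝ} (hb : 0 < b) :
    Integrable fun x : ℝ => exp (-(b * |x|)) :=
  .of_integral_ne_zero (by rw [integral_exp_neg_mul_abs hb]; positivity)

noncomputable def laplacePDFReal (x : ℝ) : ℝ := 1 / 2 * exp (-|x|)

lemma measurable_laplacePDFReal : Measurable laplacePDFReal := by
  unfold laplacePDFReal; fun_prop

lemma laplacePDFReal_nonneg (x : ℝ) : 0 ≤ laplacePDFReal x := by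
  unfold laplacePDFReal; positivity

lemma laplaceMeasure_eq_withDensity :
    laplaceMeasure = volume.withDensity fun x => ENNReal.ofReal (laplacePDFReal x) := rfl

instance : IsProbabilityMeasure laplaceMeasure := by
  constructor
  have hexp : ∫ x : ℝ, exp (-|x|) = 2 := by simpa using integral_exp_neg_mul_abs one_pos
  have hint : Integrable fun x => laplacePDFReal x := by
    simpa [laplacePDFReal] using (integrable_exp_neg_mul_abs one_pos).const_mul (1 / 2)
  rw [laplaceMeasure_eq_withDensity, withDensity_apply _ MeasurableSet.univ,
    Measure.restrict_univ, ← ofReal_integral_eq_lintegral_ofReal hint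
      (ae_of_all _ laplacePDFReal_nonneg)]
  simp [laplacePDFReal, integral_const_mul, hexp]

variable {g : ℝ → ℝ} {K : ℝ}

lemma laplacePDFReal_mul_le (hg : ∀ x, g x ≤ K * exp (|x| / 2)) (x : ℝ) :
    laplacePDFReal x * g x ≤ K / 2 * exp (-(1 / 2 * |x|)) := by
  calc laplacePDFReal x * g x ≤ laplacePDFReal x * (K * exp (|x| / 2)) :=
        mul_le_mul_of_nonneg_left (hg x) (laplacePDFReal_nonneg x)
    _ = K / 2 * exp (-(1 / 2 * |x|)) := by
        rw [laplacePDFReal, mul_mul_mul_comm, ← exp_add]; ring_nf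

lemma integrable_laplaceMeasure_of_le (hgm : Measurable g) (hg0 : ∀ x, 0 ≤ g x)
    (hg : ∀ x, g x ≤ K * exp (|x| / 2)) : Integrable g laplaceMeasure :=
  integrable_withDensity_ofReal_of_mul_le measurable_laplacePDFReal laplacePDFReal_nonneg hgm
    hg0 ((integrable_exp_neg_mul_abs (by norm_num)).const_mul _) (laplacePDFReal_mul_le hg)

lemma integral_laplaceMeasure_le_of_le (hg0 : ∀ x, 0 ≤ g x) (hg : ∀ x, g x ≤ K * exp (|x| / 2)) :
    ∫ x, g x ∂laplaceMeasure ≤ 2 * K := by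
  refine (integral_withDensity_ofReal_le_of_mul_le measurable_laplacePDFReal
    laplacePDFReal_nonneg hg0 ((integrable_exp_neg_mul_abs (by norm_num)).const_mul _)
    (laplacePDFReal_mul_le hg)).trans_eq ?_
  rw [integral_const_mul, integral_exp_neg_mul_abs (by norm_num)]
  ring

lemma integrable_id_laplaceMeasure : Integrable id laplaceMeasure :=
  (integrable_laplaceMeasure_of_le measurable_abs abs_nonneg fun x => le_two_mul_exp_half |x|).mono'
    measurable_id.aestronglyMeasurable (ae_of_all _ fun _ => le_rfl)

lemma integral_abs_laplaceMeasure_le : ∫ x, |x| ∂laplaceMeasure ≤ 4 := by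
  linarith [integral_laplaceMeasure_le_of_le abs_nonneg fun x => le_two_mul_exp_half |x|]

lemma integral_max_sub_laplaceMeasure_le (a : ℝ) :
    ∫ x, max (x - a) 0 ∂laplaceMeasure ≤ 4 * exp (-(a / 2)) := by
  have hle : ∀ x : ℝ, max (x - a) 0 ≤ 2 * exp (-(a / 2)) * exp (|x| / 2) := fun x => by
    rw [mul_assoc, ← exp_add]
    refine max_le ((le_two_mul_exp_half _).trans ?_) (by positivity)
    gcongr
    linarith [le_abs_self x]
  linarith [integral_laplaceMeasure_le_of_le (fun x => le_max_right (x - a) 0) hle]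

lemma laplaceMeasure_real_Ioi_ge {a : ℝ} (ha : 0 ≤ a) :
    1 / 2 * exp (-(a + 1)) ≤ laplaceMeasure.real (Ioi a) := by
  refine (ENNReal.ofReal_le_iff_le_toReal (measure_ne_top _ _)).mp ?_
  refine ofReal_le_withDensity_ofReal_Ioi measurable_laplacePDFReal fun x hx => ?_
  rw [laplacePDFReal, abs_of_pos (ha.trans_lt hx.1)]
  gcongr
  exact hx.2

end Laplace

section Gaussian

lemma integrable_id_gaussianReal : Integrable id (gaussianReal 0 1) :=
  (memLp_id_gaussianReal 1).integrable le_rfl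

lemma integral_abs_gaussianReal_le : ∫ x, |x| ∂gaussianReal 0 1 ≤ 1 := by
  have hsq : Integrable (fun x : ℝ => x ^ 2) (gaussianReal 0 1) :=
    (memLp_id_gaussianReal 2).integrable_sq
  have hsecond : ∫ x, x ^ 2 ∂gaussianReal 0 1 = 1 := by
    have := variance_of_integral_eq_zero (X := id) measurable_id.aemeasurable
      (integral_id_gaussianReal (μ := 0) (v := 1))
    rw [variance_id_gaussianReal] at this
    simpa using this.symm
  calc ∫ x, |x| ∂gaussianReal 0 1 ≤ ∫ x, (1 + x ^ 2) / 2 ∂gaussianReal 0 1 :=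
        integral_mono integrable_id_gaussianReal.abs (((integrable_const 1).add hsq).div_const 2)
          fun x => by nlinarith [sq_abs x, sq_nonneg (|x| - 1)]
    _ = 1 := by rw [integral_div, integral_add (integrable_const 1) hsq, hsecond]; simp

lemma gaussianReal_eq_withDensity :
    gaussianReal 0 1 = volume.withDensity fun x => ENNReal.ofReal (gaussianPDFReal 0 1 x) :=
  gaussianReal_of_var_ne_zero 0 one_ne_zero

lemma gaussianReal_real_Ioi_ge {a : ℝ} (ha : 0 ≤ a) :
    1 / 3 * exp (-(a + 1) ^ 2 / 2) ≤ (gaussianReal 0 1).real (Ioi a) := by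
  refine (ENNReal.ofReal_le_iff_le_toReal (measure_ne_top _ _)).mp ?_
  rw [gaussianReal_eq_withDensity]
  refine ofReal_le_withDensity_ofReal_Ioi (measurable_gaussianPDFReal 0 1) fun x hx => ?_
  have hx0 : 0 < x := ha.trans_lt hx.1
  have hsqrt : √(2 * π) ≤ 3 :=
    sqrt_le_iff.mpr ⟨by norm_num, by nlinarith [pi_lt_d2]⟩
  calc 1 / 3 * exp (-(a + 1) ^ 2 / 2) ≤ (√(2 * π))⁻¹ * exp (-x ^ 2 / 2) := by
        gcongr ?_ * exp ?_
        · rw [one_div]; exact inv_anti₀ (by positivity) hsqrt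
        · nlinarith [hx.2]
    _ = gaussianPDFReal 0 1 x := by simp [gaussianPDFReal]

-- Exponential tilting by `exp (a x)` shifts the standard Gaussian density by `a`.
lemma exp_mul_gaussianPDFReal (a x : ℝ) :
    exp (a * (x - a)) * gaussianPDFReal 0 1 x = exp (-(a ^ 2) / 2) * gaussianPDFReal a 1 x := by
  simp only [gaussianPDFReal, NNReal.coe_one, mul_one, sub_zero]
  rw [mul_left_comm, ← exp_add, mul_left_comm, ← exp_add]
  ring_nf

lemma integral_max_sub_gaussianReal_le {a : ℝ} (ha : 0 < a) :
    ∫ x, max (x - a) 0 ∂gaussianReal 0 1 ≤ a⁻¹ * exp (-(a ^ 2) / 2) := by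
  have hle : ∀ x, gaussianPDFReal 0 1 x * max (x - a) 0 ≤
      a⁻¹ * exp (-(a ^ 2) / 2) * gaussianPDFReal a 1 x := fun x => by
    have hmax : max (x - a) 0 ≤ a⁻¹ * exp (a * (x - a)) := by
      refine max_le ?_ (by positivity)
      rw [le_inv_mul_iff₀ ha]
      linarith [add_one_le_exp (a * (x - a))]
    calc gaussianPDFReal 0 1 x * max (x - a) 0
        ≤ gaussianPDFReal 0 1 x * (a⁻¹ * exp (a * (x - a))) :=
          mul_le_mul_of_nonneg_left hmax (gaussianPDFReal_nonneg 0 1 x)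
      _ = a⁻¹ * (exp (a * (x - a)) * gaussianPDFReal 0 1 x) := by ring
      _ = _ := by rw [exp_mul_gaussianPDFReal]; ring
  rw [gaussianReal_eq_withDensity]
  refine (integral_withDensity_ofReal_le_of_mul_le (measurable_gaussianPDFReal 0 1)
    (gaussianPDFReal_nonneg 0 1) (fun x => le_max_right (x - a) 0)
    ((integrable_gaussianPDFReal a 1).const_mul _) hle).trans_eq ?_
  rw [integral_const_mul, integral_gaussianPDFReal_eq_one a one_ne_zero, mul_one]

end Gaussian

section Asymptotics

lemma natCast_mul_exp {n : ℕ} (hn : 0 < n) (c : ℝ) : (n : ℝ) * exp c = exp (log n + c) := by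
  rw [exp_add, exp_log (Nat.cast_pos.mpr hn)]

lemma pos_of_log_natCast_pos {n : ℕ} (h : 0 < log n) : 0 < n :=
  Nat.pos_of_ne_zero fun h0 => by simp [h0] at h

variable {n : ℕ}

lemma log_div_eight_le_integral_iSup_laplaceMeasure (hL : 32 ≤ log n) :
    log n / 8 ≤ ∫ x, (⨆ i : Fin n, x i) ∂(Measure.pi fun _ : Fin n => laplaceMeasure) := by
  have hn := pos_of_log_natCast_pos (by linarith : 0 < log n)
  have := Fin.pos_iff_nonempty.mp hn
  have htail : 1 ≤ Fintype.card (Fin n) * laplaceMeasure.real (Ioi (log n / 2)) := by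
    rw [Fintype.card_fin]
    calc (1 : ℝ) ≤ 1 / 2 * exp (log n + -(log n / 2 + 1)) := by
          linarith [add_one_le_exp (log n + -(log n / 2 + 1))]
      _ = n * (1 / 2 * exp (-(log n / 2 + 1))) := by rw [mul_left_comm, natCast_mul_exp hn]
      _ ≤ n * laplaceMeasure.real (Ioi (log n / 2)) := by
          gcongr; exact laplaceMeasure_real_Ioi_ge (by linarith)
  linarith [half_sub_le_integral_iSup_pi integrable_id_laplaceMeasure (by linarith) htail,
    integral_abs_laplaceMeasure_le]

lemma integral_iSup_laplaceMeasure_le (hL : 4 ≤ log n) :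
    ∫ x, (⨆ i : Fin n, x i) ∂(Measure.pi fun _ : Fin n => laplaceMeasure) ≤ 3 * log n := by
  have hn := pos_of_log_natCast_pos (by linarith : 0 < log n)
  have := Fin.pos_iff_nonempty.mp hn
  have hexcess : (n : ℝ) * ∫ x, max (x - 2 * log n) 0 ∂laplaceMeasure ≤ 4 := by
    calc _ ≤ (n : ℝ) * (4 * exp (-(2 * log n / 2))) := by
          gcongr; exact integral_max_sub_laplaceMeasure_le _
      _ = 4 := by rw [mul_left_comm, natCast_mul_exp hn]; ring_nf; simp
  have h := integral_iSup_pi_le (ι := Fin n) integrable_id_laplaceMeasure (2 * log n)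
  rw [Fintype.card_fin] at h
  linarith

lemma sqrt_log_div_eight_le_integral_iSup_gaussianReal (hL : 64 ≤ log n) :
    √(log n) / 8 ≤
      ∫ x, (⨆ i : Fin n, x i) ∂(Measure.pi fun _ : Fin n => gaussianReal 0 1) := by
  have hn := pos_of_log_natCast_pos (by linarith : 0 < log n)
  have := Fin.pos_iff_nonempty.mp hn
  set s := √(log n)
  have hs : 8 ≤ s := le_sqrt_of_sq_le (by linarith)
  have hsq : s ^ 2 = log n := sq_sqrt (by linarith)
  have htail : 1 ≤ Fintype.card (Fin n) * (gaussianReal 0 1).real (Ioi (s / 2)) := by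
    rw [Fintype.card_fin]
    calc (1 : ℝ) ≤ 1 / 3 * exp 2 := by linarith [add_one_le_exp 2]
      _ ≤ 1 / 3 * exp (log n + -(s / 2 + 1) ^ 2 / 2) := by gcongr; nlinarith
      _ = n * (1 / 3 * exp (-(s / 2 + 1) ^ 2 / 2)) := by
          rw [mul_left_comm, natCast_mul_exp hn, neg_div]
      _ ≤ n * (gaussianReal 0 1).real (Ioi (s / 2)) := by
          gcongr; exact gaussianReal_real_Ioi_ge (by linarith)
  linarith [half_sub_le_integral_iSup_pi integrable_id_gaussianReal (by linarith) htail,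
    integral_abs_gaussianReal_le]

lemma integral_iSup_gaussianReal_le (hL : 1 ≤ log n) :
    ∫ x, (⨆ i : Fin n, x i) ∂(Measure.pi fun _ : Fin n => gaussianReal 0 1) ≤
      3 * √(log n) := by
  have hn := pos_of_log_natCast_pos (by linarith : 0 < log n)
  have := Fin.pos_iff_nonempty.mp hn
  set s := √(log n)
  have hs : 1 ≤ s := le_sqrt_of_sq_le (by linarith)
  have hsq : s ^ 2 = log n := sq_sqrt (by linarith)
  have hexcess : (n : ℝ) * ∫ x, max (x - 2 * s) 0 ∂gaussianReal 0 1 ≤ 1 := by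
    calc _ ≤ (n : ℝ) * ((2 * s)⁻¹ * exp (-(2 * s) ^ 2 / 2)) := by
          gcongr; exact integral_max_sub_gaussianReal_le (by linarith)
      _ = (2 * s)⁻¹ * exp (-log n) := by
          rw [mul_left_comm, natCast_mul_exp hn]; congr 2; nlinarith
      _ ≤ 1 := by
          have : exp (-log n) ≤ 1 := exp_le_one_iff.mpr (by linarith)
          have : (2 * s)⁻¹ ≤ 1 := inv_le_one_of_one_le₀ (by linarith)
          nlinarith [exp_pos (-log n)]
  have h := integral_iSup_pi_le (ι := Fin n) integrable_id_gaussianReal (2 * s)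
  rw [Fintype.card_fin] at h
  linarith

end Asymptotics

/-- For `T = {e_1, …, e_n}` the canonical basis, `sup_{t∈T} ⟨ξ,t⟩ = max_i ξ_i`.
For i.i.d. standard Laplace coordinates this expectation is of order `log n`, while
for i.i.d. standard Gaussians it is of order `√(log n)`; consequently the gap
`|E max_i ξ_i - E max_i g_i|` is at least `c'·log n` for large `n`, which exceeds
any bound of order `(log n)^{3/4}`. -/
theorem laplace_gaussian_gap :
    ∃ c C c' : ℝ, 0 < c ∧ 0 < C ∧ 0 < c' ∧
      ∃ N : ℕ, ∀ n : ℕ, N ≤ n →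
        (c * Real.log n ≤
            ∫ x, (⨆ i : Fin n, x i) ∂(Measure.pi fun _ : Fin n => laplaceMeasure)) ∧
        ((∫ x, (⨆ i : Fin n, x i) ∂(Measure.pi fun _ : Fin n => laplaceMeasure)) ≤
            C * Real.log n) ∧
        (c * Real.sqrt (Real.log n) ≤
            ∫ x, (⨆ i : Fin n, x i) ∂(Measure.pi fun _ : Fin n => gaussianReal 0 1)) ∧
        ((∫ x, (⨆ i : Fin n, x i) ∂(Measure.pi fun _ : Fin n => gaussianReal 0 1)) ≤
            C * Real.sqrt (Real.log n)) ∧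
        c' * Real.log n ≤
          |(∫ x, (⨆ i : Fin n, x i) ∂(Measure.pi fun _ : Fin n => laplaceMeasure)) -
            ∫ x, (⨆ i : Fin n, x i) ∂(Measure.pi fun _ : Fin n => gaussianReal 0 1)| := by
  refine ⟨1 / 8, 3, 1 / 16, by norm_num, by norm_num, by norm_num, ⌈exp (48 ^ 2)⌉₊,
    fun n hn => ?_⟩
  have hexp : exp (48 ^ 2) ≤ n := Nat.ceil_le.mp hn
  have hL : 48 ^ 2 ≤ log n := (le_log_iff_exp_le ((exp_pos _).trans_le hexp)).mpr hexp
  have hs : 48 ≤ √(log n) := le_sqrt_of_sq_le hL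
  have hsq : √(log n) ^ 2 = log n := sq_sqrt (by linarith)
  have hLapLow := log_div_eight_le_integral_iSup_laplaceMeasure (by linarith : 32 ≤ log n)
  have hGauUp := integral_iSup_gaussianReal_le (by linarith : 1 ≤ log n)
  refine ⟨by linarith, integral_iSup_laplaceMeasure_le (by linarith), by
    linarith [sqrt_log_div_eight_le_integral_iSup_gaussianReal (by linarith : 64 ≤ log n)],
    hGauUp, (by nlinarith : 1 / 16 * log n ≤ _ - _).trans (le_abs_self _)⟩
end
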